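/- In ℝ^4, the diagonal conv{0,(1,1,1,1)} of the hypercube [0,1]^4 and the triangle with vertices (0,0,0,1), (0,1,1,0), (1,0,1,0) are disjoint and at Euclidean distance 1/(3√2). -/

import Mathlib

/-!
Every point of the diagonal is `(t,t,t,t)` and every point of the triangle is
`a(0,0,0,1) + b(0,1,1,0) + c(1,0,1,0) = (c, b, b + c, a)` with `a + b + c = 1`, so the squared
distance is a quadratic in `t, b, c` whose minimum `1/18` is attained at
`t = 7/18`, `b = c = 5/18`, `a = 4/9`. A positive lower bound on all distances forces the two
sets to be disjoint, and since it is attained it is the infimum.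
-/

/-- Points of ℝ^4 as elements of Euclidean space. -/
noncomputable def pt4 (x y z w : ℝ) : EuclideanSpace ℝ (Fin 4) := WithLp.toLp 2 ![x, y, z, w]

open Set

section Metric

variable {α : Type*} [PseudoMetricSpace α] {P Q : Set α} {δ : ℝ}

lemma inter_eq_empty_of_forall_le_dist (hδ : 0 < δ) (h : ∀ p ∈ P, ∀ q ∈ Q, δ ≤ dist p q) :
    P ∩ Q = ∅ :=
  eq_empty_iff_forall_notMem.2 fun x ⟨hxP, hxQ⟩ => by
    simpa [hδ.not_ge] using h x hxP x hxQ

lemma sInf_image2_dist_eq_of_forall_le_dist (h : ∀ p ∈ P, ∀ q ∈ Q, δ ≤ dist p q) {p₀ q₀ : α}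
    (hp₀ : p₀ ∈ P) (hq₀ : q₀ ∈ Q) (hδ : dist p₀ q₀ = δ) : sInf (image2 dist P Q) = δ :=
  IsLeast.csInf_eq ⟨hδ ▸ mem_image2_of_mem hp₀ hq₀, forall_mem_image2.2 h⟩

end Metric

lemma mem_convexHull_triple_iff {𝕜 E : Type*} [Field 𝕜] [LinearOrder 𝕜] [IsStrictOrderedRing 𝕜]
    [AddCommGroup E] [Module 𝕜 E] {x y z p : E} :
    p ∈ convexHull 𝕜 {x, y, z} ↔
      ∃ a b c : 𝕜, 0 ≤ a ∧ 0 ≤ b ∧ 0 ≤ c ∧ a + b + c = 1 ∧ a • x + b • y + c • z = p := by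
  constructor
  · rw [← convexJoin_singleton_segment, mem_convexJoin]
    rintro ⟨x, rfl, _, ⟨u, v, hu, hv, huv, rfl⟩, α, β, hα, hβ, hαβ, rfl⟩
    refine ⟨α, β * u, β * v, hα, mul_nonneg hβ hu, mul_nonneg hβ hv, ?_, ?_⟩
    · linear_combination β * huv + hαβ
    · rw [smul_add, smul_smul, smul_smul, add_assoc]
  · rintro ⟨a, b, c, ha, hb, hc, habc, rfl⟩
    have hmem := (convex_convexHull 𝕜 {x, y, z}).sum_mem (t := Finset.univ) (w := ![a, b, c])
      (z := ![x, y, z]) (by intro i _; fin_cases i <;> assumption)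
      (by simpa [Fin.sum_univ_three] using habc)
      (by intro i _; fin_cases i <;> exact subset_convexHull 𝕜 _ (by simp))
    simpa [Fin.sum_univ_three] using hmem

lemma pt4_add_pt4 (x y z w x' y' z' w' : ℝ) :
    pt4 x y z w + pt4 x' y' z' w' = pt4 (x + x') (y + y') (z + z') (w + w') := by
  ext i; fin_cases i <;> simp [pt4]

lemma smul_pt4 (r x y z w : ℝ) : r • pt4 x y z w = pt4 (r * x) (r * y) (r * z) (r * w) := by
  ext i; fin_cases i <;> simp [pt4]

lemma dist_pt4 (x y z w x' y' z' w' : ℝ) :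
    dist (pt4 x y z w) (pt4 x' y' z' w') =
      √((x - x') ^ 2 + (y - y') ^ 2 + (z - z') ^ 2 + (w - w') ^ 2) := by
  simp [EuclideanSpace.dist_eq, Fin.sum_univ_four, pt4, Real.dist_eq, sq_abs, add_assoc]

lemma exists_eq_pt4_of_mem_diagonal {p : EuclideanSpace ℝ (Fin 4)}
    (hp : p ∈ segment ℝ (pt4 0 0 0 0) (pt4 1 1 1 1)) : ∃ t : ℝ, p = pt4 t t t t := by
  obtain ⟨u, t, -, -, -, rfl⟩ := hp
  exact ⟨t, by simp [smul_pt4, pt4_add_pt4]⟩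

lemma mem_triangle_iff {q : EuclideanSpace ℝ (Fin 4)} :
    q ∈ convexHull ℝ {pt4 0 0 0 1, pt4 0 1 1 0, pt4 1 0 1 0} ↔
      ∃ a b c : ℝ, 0 ≤ a ∧ 0 ≤ b ∧ 0 ≤ c ∧ a + b + c = 1 ∧ pt4 c b (b + c) a = q := by
  simp [mem_convexHull_triple_iff, smul_pt4, pt4_add_pt4]

lemma one_div_eighteen_le_sq_dist (t a b c : ℝ) (habc : a + b + c = 1) :
    1 / 18 ≤ (t - c) ^ 2 + (t - b) ^ 2 + (t - (b + c)) ^ 2 + (t - a) ^ 2 := by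
  obtain rfl : a = 1 - b - c := by linarith
  -- the difference is `(b - c)²/2 + (4t - b - c - 1)²/4 + (9(b + c) - 5)²/36`
  nlinarith [sq_nonneg (b - c), sq_nonneg (4 * t - b - c - 1), sq_nonneg (9 * (b + c) - 5)]

lemma sqrt_one_div_eighteen : √(1 / 18) = 1 / (3 * √2) := by
  rw [show (1 : ℝ) / 18 = (1 / (3 * √2)) ^ 2 by
    rw [div_pow, mul_pow, Real.sq_sqrt zero_le_two]; norm_num]
  exact Real.sqrt_sq (by positivity)

theorem stmt_16 :
    let P := segment ℝ (pt4 0 0 0 0) (pt4 1 1 1 1)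
    let Q := convexHull ℝ {pt4 0 0 0 1, pt4 0 1 1 0, pt4 1 0 1 0}
    P ∩ Q = ∅ ∧ sInf (Set.image2 dist P Q) = 1 / (3 * Real.sqrt 2) := by
  intro P Q
  have hle : ∀ p ∈ P, ∀ q ∈ Q, 1 / (3 * √2) ≤ dist p q := by
    intro p hp q hq
    obtain ⟨t, rfl⟩ := exists_eq_pt4_of_mem_diagonal hp
    obtain ⟨a, b, c, -, -, -, habc, rfl⟩ := mem_triangle_iff.1 hq
    rw [dist_pt4, ← sqrt_one_div_eighteen]
    exact Real.sqrt_le_sqrt (one_div_eighteen_le_sq_dist t a b c habc)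
  refine ⟨inter_eq_empty_of_forall_le_dist (by positivity) hle,
    sInf_image2_dist_eq_of_forall_le_dist hle (p₀ := pt4 (7/18) (7/18) (7/18) (7/18))
      (q₀ := pt4 (5/18) (5/18) (5/18 + 5/18) (4/9)) ?_ ?_ ?_⟩
  · exact ⟨11/18, 7/18, by norm_num, by norm_num, by norm_num, by simp [smul_pt4, pt4_add_pt4]⟩
  · exact mem_triangle_iff.2 ⟨4/9, 5/18, 5/18, by norm_num, by norm_num, by norm_num, by norm_num,
      rfl⟩
  · rw [dist_pt4, ← sqrt_one_div_eighteen]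
    norm_num
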